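/- For a continuous function g_0 on a compact set D, the directional (Hadamard) derivative of the sup-norm at g_0 in direction h is D_{g_0}(h) = \max\{\max_{d\in E^+} h(d), \max_{d\in E^-} (-h(d))\}, in the sense that \lim_{t\downarrow 0} (\|g_0 + t h_t\|_\infty - \|g_0\|_\infty)/t = D_{g_0}(h) whenever h_t \to h uniformly and all functions are continuous, where E^\pm = \{d \in D : g_0(d) = \pm\|g_0\|_\infty\} and the maximum over an empty set is taken as -\infty. -/

import Mathlib

/-!
Writing `|x| = max x (-x)`, the sup-norm of `g₀ + t • h` is the maximum over `D ⊕ D` of `F + t G`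
with `F = (g₀, -g₀)` and `G = (h, -h)`, and `F` attains its maximum `‖g₀‖` exactly on `E⁺ ⊔ E⁻`.
Danskin's argument gives the one-sided derivative `sSup (G '' argmax F)`: the points where `G`
exceeds this value by `ε` form a compact set on which `F` stays some `δ > 0` below its maximum,
so they do not matter for small `t`. Since the norm is 1-Lipschitz, replacing `h` by `hₜ` moves
the difference quotient by at most `‖hₜ - h‖`.
-/

open Filter Set Topology

section Danskin

variable {K : Type*} [TopologicalSpace K] [CompactSpace K] [Nonempty K] {F G : K → ℝ}

theorem sSup_image_argmax_le_div (hF : Continuous F) (hG : Continuous G) {t : ℝ} (ht : 0 < t) :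
    sSup (G '' {k | F k = ⨆ j, F j}) ≤ ((⨆ k, F k + t * G k) - ⨆ k, F k) / t := by
  obtain ⟨k₀, -, hk₀⟩ := isCompact_univ.exists_isMaxOn univ_nonempty hF.continuousOn
  have hmax : F k₀ = ⨆ j, F j :=
    le_antisymm (le_ciSup (isCompact_range hF).bddAbove k₀) (ciSup_le fun k => hk₀ (mem_univ k))
  refine csSup_le ⟨G k₀, k₀, hmax, rfl⟩ ?_
  rintro _ ⟨k, hk : F k = ⨆ j, F j, rfl⟩
  rw [le_div_iff₀ ht, mul_comm, le_sub_iff_add_le', ← hk]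
  exact le_ciSup (isCompact_range (hF.add (continuous_const.mul hG))).bddAbove k

theorem eventually_iSup_add_mul_le (hF : Continuous F) (hG : Continuous G) {ε : ℝ} (hε : 0 < ε) :
    ∀ᶠ t in 𝓝[>] 0, (⨆ k, F k + t * G k) ≤
      (⨆ k, F k) + t * (sSup (G '' {k | F k = ⨆ j, F j}) + ε) := by
  set m := ⨆ k, F k
  set L := sSup (G '' {k | F k = m})
  have hFm : ∀ k, F k ≤ m := le_ciSup (isCompact_range hF).bddAbove
  have hGL : ∀ k, F k = m → G k ≤ L := fun k hk =>
    le_csSup ((isCompact_range hG).bddAbove.mono (image_subset_range _ _)) ⟨k, hk, rfl⟩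
  have hA : ∀ k ∈ {k | L + ε ≤ G k}, 0 < m - F k := fun k (hk : L + ε ≤ G k) =>
    sub_pos.2 <| (hFm k).lt_of_ne fun hkm => by linarith [hGL k hkm]
  obtain ⟨δ, hδ, hAδ⟩ := (isClosed_le continuous_const hG).isCompact.exists_forall_le'
    (f := fun k => m - F k) (continuous_const.sub hF).continuousOn hA
  have hsmall : ∀ᶠ t in 𝓝[>] (0 : ℝ), t * ((⨆ k, G k) - (L + ε)) < δ := by
    refine Tendsto.eventually_lt_const hδ ?_
    simpa using ((continuous_mul_const ((⨆ k, G k) - (L + ε))).tendsto 0).mono_left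
      nhdsWithin_le_nhds
  filter_upwards [hsmall, self_mem_nhdsWithin] with t hsmall (ht : 0 < t)
  refine ciSup_le fun k => ?_
  by_cases hk : L + ε ≤ G k
  · have := mul_le_mul_of_nonneg_left (le_ciSup (isCompact_range hG).bddAbove k) ht.le
    linarith [hAδ k hk]
  · have := mul_le_mul_of_nonneg_left (not_le.mp hk).le ht.le
    linarith [hFm k]

theorem tendsto_iSup_add_mul_sub_div (hF : Continuous F) (hG : Continuous G) :
    Tendsto (fun t => ((⨆ k, F k + t * G k) - ⨆ k, F k) / t) (𝓝[>] 0)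
      (𝓝 (sSup (G '' {k | F k = ⨆ j, F j}))) := by
  refine tendsto_order.2 ⟨fun a ha => ?_, fun b hb => ?_⟩
  · filter_upwards [self_mem_nhdsWithin] with t (ht : 0 < t)
    exact ha.trans_le (sSup_image_argmax_le_div hF hG ht)
  · filter_upwards [eventually_iSup_add_mul_le hF hG (half_pos (sub_pos.2 hb)),
      self_mem_nhdsWithin] with t hle (ht : 0 < t)
    rw [div_lt_iff₀ ht]
    nlinarith

end Danskin

theorem tendsto_norm_add_smul_sub_div_of_tendsto {E : Type*} [SeminormedAddCommGroup E]
    [NormedSpace ℝ E] {x v : E} {w : ℝ → E} {L : ℝ} (hw : Tendsto w (𝓝[>] 0) (𝓝 v))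
    (hv : Tendsto (fun t => (‖x + t • v‖ - ‖x‖) / t) (𝓝[>] 0) (𝓝 L)) :
    Tendsto (fun t => (‖x + t • w t‖ - ‖x‖) / t) (𝓝[>] 0) (𝓝 L) := by
  have hdiff : Tendsto (fun t => (‖x + t • w t‖ - ‖x‖) / t - (‖x + t • v‖ - ‖x‖) / t)
      (𝓝[>] 0) (𝓝 0) := by
    refine squeeze_zero_norm' ?_ (tendsto_iff_norm_sub_tendsto_zero.1 hw)
    filter_upwards [self_mem_nhdsWithin] with t (ht : 0 < t)
    rw [← sub_div, sub_sub_sub_cancel_right, norm_div, Real.norm_of_nonneg ht.le,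
      div_le_iff₀' ht]
    calc ‖‖x + t • w t‖ - ‖x + t • v‖‖ ≤ ‖(x + t • w t) - (x + t • v)‖ := abs_norm_sub_norm_le _ _
      _ = t * ‖w t - v‖ := by
        rw [add_sub_add_left_eq_sub, ← smul_sub, norm_smul, Real.norm_of_nonneg ht.le]
  simpa using hv.add hdiff

theorem ContinuousMap.norm_eq_iSup_sumElim {D : Type*} [TopologicalSpace D] [CompactSpace D]
    [Nonempty D] (f : C(D, ℝ)) : ‖f‖ = ⨆ k, Sum.elim f (fun d => -f d) k := by
  have hbdd : BddAbove (range (Sum.elim f fun d => -f d)) :=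
    (isCompact_range (f.continuous.sumElim f.continuous.neg)).bddAbove
  refine le_antisymm ((f.norm_le_of_nonempty).2 fun d => abs_le'.2
    ⟨le_ciSup hbdd (Sum.inl d), le_ciSup hbdd (Sum.inr d)⟩) (ciSup_le ?_)
  rintro (d | d)
  · exact (le_abs_self _).trans (f.norm_coe_le_norm d)
  · exact (neg_le_abs _).trans (f.norm_coe_le_norm d)

theorem stmt5_general {D : Type*} [MetricSpace D] [CompactSpace D] [Nonempty D]
    (g0 h : C(D, ℝ)) (ht : ℝ → C(D, ℝ))
    (hconv : Filter.Tendsto (fun t => ‖ht t - h‖) (nhdsWithin 0 (Set.Ioi 0)) (nhds 0)) :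
    Filter.Tendsto (fun t => (‖g0 + t • ht t‖ - ‖g0‖) / t)
      (nhdsWithin 0 (Set.Ioi 0))
      (nhds (sSup ((fun d => h d) '' {d | g0 d = ‖g0‖} ∪
        (fun d => -h d) '' {d | g0 d = -‖g0‖}))) := by
  set F : D ⊕ D → ℝ := Sum.elim g0 fun d => -g0 d
  set G : D ⊕ D → ℝ := Sum.elim h fun d => -h d
  have hnorm : ∀ t : ℝ, ‖g0 + t • h‖ = ⨆ k, F k + t * G k := fun t => by
    rw [ContinuousMap.norm_eq_iSup_sumElim]
    congr 1
    ext (d | d) <;> simp [F, G]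
    ring
  have hargmax : G '' {k | F k = ⨆ j, F j} =
      (fun d => h d) '' {d | g0 d = ‖g0‖} ∪ (fun d => -h d) '' {d | g0 d = -‖g0‖} := by
    rw [← ContinuousMap.norm_eq_iSup_sumElim]
    ext
    simp [F, G, Sum.exists, neg_eq_iff_eq_neg]
  refine tendsto_norm_add_smul_sub_div_of_tendsto (tendsto_iff_norm_sub_tendsto_zero.2 hconv) ?_
  simpa only [hnorm, ContinuousMap.norm_eq_iSup_sumElim g0, hargmax] using
    tendsto_iSup_add_mul_sub_div (F := F) (G := G) (g0.continuous.sumElim g0.continuous.neg)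
      (h.continuous.sumElim h.continuous.neg)

/-- Directional Hadamard derivative of the sup-norm at g₀ in direction h:
(‖g₀ + t·hₜ‖ - ‖g₀‖)/t → max{max_{E⁺} h, max_{E⁻}(-h)}, where the two maxima are
combined as the supremum of the union of the corresponding image sets. -/
theorem stmt5 {D : Type*} [MetricSpace D] [CompactSpace D] [Nonempty D]
    (g0 h : C(D, ℝ)) (hg0 : 0 < ‖g0‖) (ht : ℝ → C(D, ℝ))
    (hconv : Filter.Tendsto (fun t => ‖ht t - h‖) (nhdsWithin 0 (Set.Ioi 0)) (nhds 0)) :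
    Filter.Tendsto (fun t => (‖g0 + t • ht t‖ - ‖g0‖) / t)
      (nhdsWithin 0 (Set.Ioi 0))
      (nhds (sSup ((fun d => h d) '' {d | g0 d = ‖g0‖} ∪
        (fun d => -h d) '' {d | g0 d = -‖g0‖}))) :=
  stmt5_general g0 h ht hconv
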